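/- For every infinite finitely generated group G there exist two sequences (g_n)_{n∈ℕ} and (h_n)_{n∈ℕ} of elements of G, each recursive with oracle WP(G) (i.e. there is a Turing machine with oracle WP(G) that on input n outputs a word over S representing g_n, respectively h_n), such that the family of sets {1_G} together with all g_n·B_n and all h_n·B_n (n ∈ ℕ) is pairwise disjoint, where B_n is the ball of radius n around 1_G in the word metric. -/

import Mathlib

open scoped Classical

noncomputable section

namespace SDG

/-! ### Relativized computability -/

/-- Partial recursive functions `ℕ →. ℕ` relative to an oracle `O`. -/
inductive NatPartrecIn (O : ℕ →. ℕ) : (ℕ →. ℕ) → Prop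
  | oracle : NatPartrecIn O O
  | zero : NatPartrecIn O (pure 0)
  | succ : NatPartrecIn O Nat.succ
  | left : NatPartrecIn O ↑fun n : ℕ => n.unpair.1
  | right : NatPartrecIn O ↑fun n : ℕ => n.unpair.2
  | pair {f g} : NatPartrecIn O f → NatPartrecIn O g →
      NatPartrecIn O fun n => Nat.pair <$> f n <*> g n
  | comp {f g} : NatPartrecIn O f → NatPartrecIn O g →
      NatPartrecIn O fun n => g n >>= f
  | prec {f g} : NatPartrecIn O f → NatPartrecIn O g →
      NatPartrecIn O (Nat.unpaired fun a n =>
        n.rec (f a) fun y IH => do let i ← IH; g (Nat.pair a (Nat.pair y i)))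
  | rfind {f} : NatPartrecIn O f →
      NatPartrecIn O fun a => Nat.rfind fun n => (fun m => m = 0) <$> f (Nat.pair a n)

/-- A partial function between `Primcodable` types is partial recursive in the oracle `O`. -/
def PartrecIn (O : ℕ →. ℕ) {α σ : Type} [Primcodable α] [Primcodable σ] (f : α →. σ) : Prop :=
  NatPartrecIn O fun n =>
    Part.bind (Part.ofOption (Encodable.decode (α := α) n)) fun a => (f a).map Encodable.encode

/-- A predicate is recursively enumerable in the oracle `O` if it is the domain of a partial
function recursive in `O`. -/
def RePredIn (O : ℕ →. ℕ) {α : Type} [Primcodable α] (p : α → Prop) : Prop :=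
  PartrecIn O fun a => Part.assert (p a) fun _ => Part.some ()

/-- The characteristic function (as an oracle `ℕ →. ℕ`) of a set `L` of elements of a
`Primcodable` type: on the code of an element of `L` it answers `1`, elsewhere `0`. -/
def charFun {α : Type} [Primcodable α] (L : Set α) : ℕ →. ℕ :=
  fun n => Part.some (if ∃ a ∈ L, Encodable.encode a = n then 1 else 0)

/-! ### Finitely generated groups, words and pattern codings -/

variable {G : Type} [Group G]

/-- The group element represented by a word over the generators `S`. -/
def wordEval {k : ℕ} (S : Fin k → G) (w : List (Fin k)) : G :=
  (w.map S).prod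

/-- `S : Fin k → G` is a finite symmetric generating family containing the identity. -/
def IsGenData {k : ℕ} (S : Fin k → G) : Prop :=
  (∃ i, S i = 1) ∧ (∀ i, ∃ j, S j = (S i)⁻¹) ∧ Subgroup.closure (Set.range S) = ⊤

/-- The word problem of `G` with respect to the generating family `S`. -/
def WP {k : ℕ} (S : Fin k → G) : Set (List (Fin k)) :=
  {w | wordEval S w = 1}

/-- A pattern coding over the alphabet `A`: a finite list of pairs (word, symbol). -/
abbrev PatternCoding (k : ℕ) (A : Type) : Type :=
  List (List (Fin k) × A)

/-- The subshift defined by a set `C` of pattern codings: configurations in which no translate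
of a coded pattern occurs. -/
def XC {k : ℕ} (S : Fin k → G) {A : Type} (C : Set (PatternCoding k A)) : Set (G → A) :=
  {x | ¬ ∃ (g : G) (c : PatternCoding k A), c ∈ C ∧ ∀ p ∈ c, x (g * wordEval S p.1) = p.2}

/-- A set is effectively closed if it is defined by a recursively enumerable set of
pattern codings. -/
def EffectivelyClosed {k : ℕ} (S : Fin k → G) {A : Type} [Primcodable A]
    (X : Set (G → A)) : Prop :=
  ∃ C : Set (PatternCoding k A), REPred (· ∈ C) ∧ X = XC S C

/-- A set is `G`-effectively closed if it is defined by a set of pattern codings which is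
recursively enumerable with oracle the word problem of `G`. -/
def GEffectivelyClosed {k : ℕ} (S : Fin k → G) {A : Type} [Primcodable A]
    (X : Set (G → A)) : Prop :=
  ∃ C : Set (PatternCoding k A), RePredIn (charFun (WP S)) (· ∈ C) ∧ X = XC S C

/-- A pattern coding is consistent if words representing the same group element receive the
same symbol. -/
def Consistent {k : ℕ} (S : Fin k → G) {A : Type} (c : PatternCoding k A) : Prop :=
  ∀ p ∈ c, ∀ q ∈ c, wordEval S p.1 = wordEval S q.1 → p.2 = q.2

/-! ### Subshifts, SFTs, sofic subshifts -/

/-- `X ⊆ A^G` is a subshift: closed (for the product of the discrete topology) and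
shift-invariant. -/
def IsSubshift {A : Type} (X : Set (G → A)) : Prop :=
  (letI : TopologicalSpace A := ⊥; IsClosed X) ∧
    ∀ x ∈ X, ∀ g : G, (fun h => x (g⁻¹ * h)) ∈ X

/-- A pattern with finite support over the alphabet `A`. -/
structure Pattern (G : Type) (A : Type) where
  supp : Finset G
  val : (g : G) → g ∈ supp → A

/-- The pattern `p` occurs in the configuration `x` at position `g`. -/
def PatternOccurs {A : Type} (p : Pattern G A) (x : G → A) (g : G) : Prop :=
  ∀ (h : G) (hh : h ∈ p.supp), x (g * h) = p.val h hh

/-- The subshift defined by a set of forbidden patterns. -/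
def XPat {A : Type} (Fs : Set (Pattern G A)) : Set (G → A) :=
  {x | ¬ ∃ (g : G) (p : Pattern G A), p ∈ Fs ∧ PatternOccurs p x g}

/-- A subshift of finite type: defined by a finite set of forbidden patterns. -/
def IsSFT {A : Type} (X : Set (G → A)) : Prop :=
  ∃ Fs : Set (Pattern G A), Fs.Finite ∧ X = XPat Fs

/-- A witness that `X` is sofic: an SFT `Y` over a finite alphabet `B` together with a factor
code (continuous shift-equivariant surjection) from `Y` onto `X`. -/
structure SoficVia (G : Type) [Group G] {A : Type} (X : Set (G → A)) : Type 1 where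
  B : Type
  finB : Fintype B
  Y : Set (G → B)
  sft : IsSFT Y
  subY : IsSubshift Y
  phi : (G → B) → (G → A)
  cont : letI : TopologicalSpace B := ⊥
         letI : TopologicalSpace A := ⊥
         ContinuousOn phi Y
  equiv : ∀ y ∈ Y, ∀ g : G, phi (fun h => y (g⁻¹ * h)) = fun h => phi y (g⁻¹ * h)
  image : phi '' Y = X

/-- A subshift is sofic if it is the image of an SFT under a factor code. -/
def IsSofic {A : Type} (X : Set (G → A)) : Prop :=
  Nonempty (SoficVia G X)

/-- A factor code from `X` onto `Y`: continuous (discrete product topologies),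
shift-equivariant and surjective. -/
def FactorCode {A B : Type} (X : Set (G → A)) (Y : Set (G → B))
    (φ : (G → A) → (G → B)) : Prop :=
  (letI : TopologicalSpace A := ⊥
   letI : TopologicalSpace B := ⊥
   ContinuousOn φ X) ∧
  (∀ x ∈ X, ∀ g : G, φ (fun h => x (g⁻¹ * h)) = fun h => φ x (g⁻¹ * h)) ∧
  φ '' X = Y

/-- Two subshifts are conjugate if there is a shift-equivariant homeomorphism between them. -/
def Conjugate {A B : Type} (X : Set (G → A)) (Y : Set (G → B)) : Prop :=
  ∃ (φ : (G → A) → (G → B)) (ψ : (G → B) → (G → A)),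
    FactorCode X Y φ ∧ FactorCode Y X ψ ∧
    (∀ x ∈ X, ψ (φ x) = x) ∧ (∀ y ∈ Y, φ (ψ y) = y)

/-- The one-or-less subshift: configurations with at most one occurrence of the symbol `1`
(represented by `true`). -/
def Xle1 (G : Type) : Set (G → Bool) :=
  {x | ∀ g h : G, x g = true → x h = true → g = h}

/-! ### `G`-machines -/

/-- A `G`-machine: finite set of states, finite tape alphabet `A` with a blank symbol, initial
state, accepting states, and a transition function moving with the generators `Fin k`. -/
structure GMachine (k : ℕ) (A : Type) : Type 1 where
  Q : Type
  finQ : Fintype Q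
  blank : A
  q0 : Q
  QF : Set Q
  delta : A × Q → A × Q × Fin k

/-- One step of a `G`-machine in the fixed head model: if `δ(x(1),q) = (a,q',s)` then the new
configuration is `σ_{s⁻¹} x̃` where `x̃` is `x` with the value at `1` replaced by `a`. -/
def GMachine.step {k : ℕ} {A : Type} (M : GMachine k A) (S : Fin k → G) :
    (G → A) × M.Q → (G → A) × M.Q :=
  fun xq =>
    let t := M.delta (xq.1 1, xq.2)
    let xt : G → A := Function.update xq.1 1 t.1
    (fun h => xt (S t.2.2 * h), t.2.1)

/-- The configuration which equals the pattern `p` on its support and `blank` elsewhere. -/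
def Pattern.config {A : Type} (p : Pattern G A) (blank : A) : G → A :=
  fun g => if h : g ∈ p.supp then p.val g h else blank

/-- The `G`-machine `M` accepts the pattern `p` if starting from the configuration `x^p` in the
initial state it eventually reaches an accepting state. -/
def GMachine.Accepts {k : ℕ} {A : Type} (M : GMachine k A) (S : Fin k → G)
    (p : Pattern G A) : Prop :=
  ∃ n : ℕ, ((M.step S)^[n] (p.config M.blank, M.q0)).2 ∈ M.QF

/-- A set of patterns is `G`-recursively enumerable if some `G`-machine accepts exactly its
elements. -/
def GRecEnum {k : ℕ} (S : Fin k → G) {A : Type} (L : Set (Pattern G A)) : Prop :=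
  ∃ M : GMachine k A, ∀ p : Pattern G A, M.Accepts S p ↔ p ∈ L

/-- The consistent pattern coding `c` defines the pattern `p`. -/
def Defines {k : ℕ} (S : Fin k → G) {A : Type} (c : PatternCoding k A)
    (p : Pattern G A) : Prop :=
  (∀ g : G, g ∈ p.supp ↔ ∃ q ∈ c, wordEval S q.1 = g) ∧
  ∀ q ∈ c, ∀ hg : wordEval S q.1 ∈ p.supp, p.val (wordEval S q.1) hg = q.2

/-- `p(C)`: the set of patterns defined by the consistent pattern codings of `C`. -/
def patternsOf {k : ℕ} (S : Fin k → G) {A : Type} (C : Set (PatternCoding k A)) :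
    Set (Pattern G A) :=
  {p | ∃ c ∈ C, Consistent S c ∧ Defines S c p}

/-- A set of patterns is closed by extensions if any pattern extending a pattern of the set
also belongs to the set. -/
def ClosedByExtensions {A : Type} (L : Set (Pattern G A)) : Prop :=
  ∀ (p₁ p₂ : Pattern G A) (hsub : p₁.supp ⊆ p₂.supp),
    (∀ (g : G) (hg : g ∈ p₁.supp), p₂.val g (hsub hg) = p₁.val g hg) →
    p₁ ∈ L → p₂ ∈ L

/-! ### Balls, ends, amenability -/

/-- The ball of radius `n` in the word metric given by `S`. -/
def ballS {k : ℕ} (S : Fin k → G) (n : ℕ) : Set G :=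
  {x | ∃ w : List (Fin k), w.length ≤ n ∧ wordEval S w = x}

/-- Adjacency in the Cayley graph restricted to the set `V`. -/
def Adj {k : ℕ} (S : Fin k → G) (V : Set G) (a b : G) : Prop :=
  a ∈ V ∧ b ∈ V ∧ ∃ i, a * S i = b

/-- Reachability inside `V` in the Cayley graph of `(G,S)`. -/
def Reach {k : ℕ} (S : Fin k → G) (V : Set G) (a b : G) : Prop :=
  Relation.ReflTransGen (Adj S V) a b

/-- `G` has at least two ends: for some `n`, the complement of the ball of radius `n` in the
Cayley graph has at least two infinite connected components. -/
def HasTwoOrMoreEnds {k : ℕ} (S : Fin k → G) : Prop :=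
  ∃ (n : ℕ) (x y : G), x ∉ ballS S n ∧ y ∉ ballS S n ∧
    {z | Reach S (ballS S n)ᶜ x z}.Infinite ∧
    {z | Reach S (ballS S n)ᶜ y z}.Infinite ∧
    ¬ Reach S (ballS S n)ᶜ x y

/-- The Følner condition: `G` is amenable. -/
def FolnerAmenable (G : Type) [Group G] : Prop :=
  ∀ (K : Finset G) (ε : ℝ), 0 < ε →
    ∃ F : Finset G, F.Nonempty ∧ ∀ k ∈ K,
      ((F \ F.image (fun x => x * k)).card : ℝ) < ε * F.card

/-! ### `G × ℤ`, presentations, hardness and the domino problems -/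

/-- Generators of `G × ℤ`: the generators of `G` paired with `0`, together with `(1,±1)`. -/
def prodGens {k : ℕ} (S : Fin k → G) : Fin (k + 2) → G × Multiplicative ℤ :=
  fun i =>
    if h : (i : ℕ) < k then (S ⟨i, h⟩, 1)
    else if (i : ℕ) = k then (1, Multiplicative.ofAdd 1)
    else (1, Multiplicative.ofAdd (-1))

/-- The element of the free group over the generator indices represented by a word. -/
def freeWord {k : ℕ} (w : List (Fin k)) : FreeGroup (Fin k) :=
  (w.map FreeGroup.of).prod

/-- `G` is recursively presented with respect to `S`: there is a recursively enumerable set of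
relators (words over the generators) whose normal closure in the free group over the
generator indices is the kernel of the evaluation map. -/
def RecursivelyPresented {k : ℕ} (S : Fin k → G) : Prop :=
  ∃ R : Set (List (Fin k)), REPred (· ∈ R) ∧
    MonoidHom.ker (FreeGroup.lift S) = Subgroup.normalClosure (freeWord '' R)

/-- `L` is hard for the class of predicates recursively enumerable in the oracle `O`
(equivalently, hard for the halting problem of machines with oracle `O`): every
such predicate many-one reduces to `L` via a computable function. -/
def OracleREHard {α : Type} [Primcodable α] (O : ℕ →. ℕ) (L : Set α) : Prop :=
  ∀ p : ℕ → Prop, RePredIn O p → ∃ f : ℕ → α, Computable f ∧ ∀ n, p n ↔ f n ∈ L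

/-- The domino problem of `(K,T)`: pairs `(N, F)` of an alphabet size and a finite list of
pattern codings over `ℕ` such that no configuration with symbols `< N` avoids `F`. -/
def DP {K : Type} [Group K] {m : ℕ} (T : Fin m → K) : Set (ℕ × List (PatternCoding m ℕ)) :=
  {q | ¬ ∃ x : K → ℕ, (∀ g, x g < q.1) ∧ x ∈ XC T {c | c ∈ q.2}}

/-- The origin constrained domino problem of `(K,T)`: triples `((N,a),F)` such that no
configuration with symbols `< N` and the symbol `a` at the origin avoids `F`. -/
def OCDP {K : Type} [Group K] {m : ℕ} (T : Fin m → K) :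
    Set ((ℕ × ℕ) × List (PatternCoding m ℕ)) :=
  {q | ¬ ∃ x : K → ℕ, (∀ g, x g < q.1.1) ∧ x 1 = q.1.2 ∧ x ∈ XC T {c | c ∈ q.2}}

end SDG

/-!
Pick, for every `j`, a word `x j` of length at most `j² + 1` whose value lies outside the ball of
radius `j²`: such words exist because `G` is infinite while balls are finite. A bounded search
finds one, and the search asks the word-problem oracle only finitely many questions, all below a
primitive recursive bound, so `j ↦ x j` is computable relative to the oracle. Put `g n = x (2n)`
and `h n = x (2n + 1)`. For `i < j` the translates `x i B_{i/2}` and `x j B_{j/2}` are disjoint,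
since otherwise `x j ∈ B_{i² + 1 + i/2 + j/2} ⊆ B_{j²}`; likewise `1 ∉ x j B_{j/2}`.
-/

section OracleComputability

open Encodable

variable {α β γ σ : Type} [Primcodable α] [Primcodable β] [Primcodable γ] [Primcodable σ]
  {O : Set (ℕ →. ℕ)}

theorem ComputableIn.comp {f : β → σ} {g : α → β} (hf : ComputableIn O f)
    (hg : ComputableIn O g) : ComputableIn O fun a => f (g a) :=
  (Nat.RecursiveIn.comp hf hg).of_eq fun n => by
    rcases decode (α := α) n with - | a <;> simp [encodek]

theorem ComputableIn.pair {f : α → β} {g : α → σ} (hf : ComputableIn O f)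
    (hg : ComputableIn O g) : ComputableIn O fun a => (f a, g a) :=
  (Nat.RecursiveIn.pair hf hg).of_eq fun n => by
    rcases decode (α := α) n with - | a <;> simp [Seq.seq]

theorem ComputableIn₂.comp {f : β → γ → σ} {g : α → β} {h : α → γ} (hf : ComputableIn₂ O f)
    (hg : ComputableIn O g) (hh : ComputableIn O h) : ComputableIn O fun a => f (g a) (h a) :=
  ComputableIn.comp (f := fun p : β × γ => f p.1 p.2) hf (hg.pair hh)

theorem computableIn_map_range (ov : ℕ → ℕ) :
    ComputableIn {fun n => Part.some (ov n)} fun n => (List.range n).map ov := by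
  set O : ℕ →. ℕ := fun n => Part.some (ov n)
  have hov : ComputableIn {O} ov := RecursiveIn.oracle O rfl
  -- `encode (a :: l) = succ (pair a (encode l))`, so this step conses the next oracle value.
  have hstep : ComputableIn {O} fun q : ℕ =>
      Nat.succ (Nat.pair (ov q.unpair.2.unpair.1) q.unpair.2.unpair.2) :=
    (Primrec.succ.comp₂ Primrec₂.natPair).computableIn₂.comp
      (hov.comp (Primrec.fst.comp (Primrec.unpair.comp
        (Primrec.snd.comp Primrec.unpair))).computableIn)
      (Primrec.snd.comp (Primrec.unpair.comp (Primrec.snd.comp Primrec.unpair))).computableIn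
  have hrev : ComputableIn {O} fun p : ℕ => ((List.range p.unpair.2).map ov).reverse := by
    refine (Nat.RecursiveIn.prec Nat.RecursiveIn.zero (RecursiveIn.iff_nat.1 hstep)).of_eq
      fun p => ?_
    simp only [decode_nat, Part.coe_some, Part.bind_some, Part.map_some]
    induction p.unpair.2 with
    | zero => rfl
    | succ n ih =>
      simp only [Nat.unpair_pair] at ih ⊢
      rw [ih]
      simp [List.range_succ]
  exact (Primrec.list_reverse.computableIn.comp hrev).comp
    (Primrec₂.natPair.comp (Primrec.const 0) Primrec.id).computableIn |>.of_eq fun n => by simp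

theorem Primrec₂.computableIn_map_range_comp (ov : ℕ → ℕ) {F : α → List ℕ → σ} {M : α → ℕ}
    (hF : Primrec₂ F) (hM : Primrec M) :
    ComputableIn {fun n => Part.some (ov n)} fun a => F a ((List.range (M a)).map ov) :=
  hF.computableIn₂.comp ComputableIn.id ((computableIn_map_range ov).comp hM.computableIn)

theorem Primrec.list_all {f : α → List β} {p : α → β → Bool} (hf : Primrec f)
    (hp : Primrec₂ p) : Primrec fun a => (f a).all (p a) :=
  (Primrec.list_foldr hf (Primrec.const true)
    (Primrec.and.comp (hp.comp Primrec.fst (Primrec.fst.comp Primrec.snd))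
      (Primrec.snd.comp Primrec.snd)).to₂).of_eq fun a => by
    induction f a <;> simp_all

theorem Primrec.list_find? {f : α → List β} {p : α → β → Bool} (hf : Primrec f)
    (hp : Primrec₂ p) : Primrec fun a => (f a).find? (p a) :=
  (Primrec.list_getElem?.comp hf (Primrec.list_findIdx hf hp)).of_eq fun _ =>
    List.find?_eq_getElem?_findIdx.symm

theorem Encodable.encode_lt_encode_of_mem {a : α} {l : List α} (h : a ∈ l) :
    encode a < encode l := by
  induction l with
  | nil => simp at h
  | cons b l ih =>
    rw [encode_list_cons, Nat.lt_succ_iff]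
    rcases List.mem_cons.1 h with rfl | h
    · exact Nat.left_le_pair _ _
    · exact (ih h).le.trans (Nat.right_le_pair _ _)

end OracleComputability

namespace SDG

theorem NatPartrecIn.of_recursiveIn {O : ℕ →. ℕ} {f : ℕ →. ℕ} (hf : Nat.RecursiveIn {O} f) :
    NatPartrecIn O f := by
  induction hf with
  | zero => exact .zero
  | succ => exact .succ
  | left => exact .left
  | right => exact .right
  | oracle g hg => exact (Set.mem_singleton_iff.1 hg) ▸ .oracle
  | pair _ _ ihf ihg => exact .pair ihf ihg
  | comp _ _ ihf ihg => exact .comp ihf ihg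
  | prec _ _ ihf ihg => exact .prec ihf ihg
  | rfind _ ih => exact .rfind ih

theorem PartrecIn.of_computableIn {O : ℕ →. ℕ} {α σ : Type} [Primcodable α] [Primcodable σ]
    {f : α → σ} (hf : ComputableIn {O} f) : PartrecIn O fun a => Part.some (f a) :=
  NatPartrecIn.of_recursiveIn hf

section Words

variable {G : Type} [Group G] {k : ℕ} (S : Fin k → G)

@[simp]
theorem wordEval_nil : wordEval S [] = 1 := rfl

@[simp]
theorem wordEval_cons (i : Fin k) (w : List (Fin k)) :
    wordEval S (i :: w) = S i * wordEval S w := List.prod_cons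

@[simp]
theorem wordEval_append (w v : List (Fin k)) :
    wordEval S (w ++ v) = wordEval S w * wordEval S v := by
  simp [wordEval]

def invWord (ι : Fin k → Fin k) (w : List (Fin k)) : List (Fin k) :=
  (w.map ι).reverse

@[simp]
theorem length_invWord (ι : Fin k → Fin k) (w : List (Fin k)) :
    (invWord ι w).length = w.length := by
  simp [invWord]

variable {S} {ι : Fin k → Fin k}

theorem wordEval_invWord (hι : ∀ i, S (ι i) = (S i)⁻¹) (w : List (Fin k)) :
    wordEval S (invWord ι w) = (wordEval S w)⁻¹ := by
  simp [wordEval, invWord, List.prod_inv_reverse, List.map_reverse, Function.comp_def, hι]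

theorem exists_wordEval_eq (hι : ∀ i, S (ι i) = (S i)⁻¹)
    (hgen : Subgroup.closure (Set.range S) = ⊤) (g : G) : ∃ w, wordEval S w = g := by
  induction (hgen ▸ Subgroup.mem_top g : g ∈ Subgroup.closure (Set.range S))
    using Subgroup.closure_induction with
  | mem _ h =>
    obtain ⟨i, rfl⟩ := h
    exact ⟨[i], by simp⟩
  | one => exact ⟨[], rfl⟩
  | mul _ _ _ _ hx hy =>
    obtain ⟨w, rfl⟩ := hx
    obtain ⟨v, rfl⟩ := hy
    exact ⟨w ++ v, wordEval_append S w v⟩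
  | inv _ _ hx =>
    obtain ⟨w, rfl⟩ := hx
    exact ⟨invWord ι w, wordEval_invWord hι w⟩

end Words

section Balls

open Function

variable {G : Type} [Group G] {k : ℕ} {S : Fin k → G}

theorem wordEval_mem_ballS (w : List (Fin k)) : wordEval S w ∈ ballS S w.length :=
  ⟨w, le_rfl, rfl⟩

theorem one_mem_ballS (n : ℕ) : (1 : G) ∈ ballS S n :=
  ⟨[], Nat.zero_le n, rfl⟩

theorem ballS_mono {m n : ℕ} (h : m ≤ n) : ballS S m ⊆ ballS S n := by
  rintro _ ⟨w, hw, rfl⟩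
  exact ⟨w, hw.trans h, rfl⟩

theorem mul_mem_ballS {x y : G} {m n : ℕ} (hx : x ∈ ballS S m) (hy : y ∈ ballS S n) :
    x * y ∈ ballS S (m + n) := by
  obtain ⟨w, hw, rfl⟩ := hx
  obtain ⟨v, hv, rfl⟩ := hy
  exact ⟨w ++ v, by simp; omega, wordEval_append S w v⟩

theorem inv_mem_ballS {ι : Fin k → Fin k} (hι : ∀ i, S (ι i) = (S i)⁻¹) {x : G} {n : ℕ}
    (hx : x ∈ ballS S n) : x⁻¹ ∈ ballS S n := by
  obtain ⟨w, hw, rfl⟩ := hx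
  exact ⟨invWord ι w, by simpa using hw, wordEval_invWord hι w⟩

theorem ballS_finite (n : ℕ) : (ballS S n).Finite :=
  ((List.finite_length_le (Fin k) n).image (wordEval S)).subset
    fun _ ⟨w, hw, hx⟩ => ⟨w, hw, hx⟩

theorem exists_length_le_succ_notMem_ballS [Infinite G] {ι : Fin k → Fin k}
    (hι : ∀ i, S (ι i) = (S i)⁻¹) (hgen : Subgroup.closure (Set.range S) = ⊤) (N : ℕ) :
    ∃ w : List (Fin k), w.length ≤ N + 1 ∧ wordEval S w ∉ ballS S N := by
  by_contra! hfar
  obtain ⟨g, hg⟩ := (ballS_finite (S := S) N).exists_notMem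
  suffices hall : ∀ w : List (Fin k), wordEval S w ∈ ballS S N by
    obtain ⟨w, rfl⟩ := exists_wordEval_eq hι hgen g
    exact hg (hall w)
  intro w
  induction w with
  | nil => exact one_mem_ballS N
  | cons i w ih =>
    obtain ⟨u, hu, hwu⟩ := ih
    simpa [← hwu] using hfar (i :: u) (by simp; omega)

theorem disjoint_mul_ballS {ι : Fin k → Fin k} (hι : ∀ i, S (ι i) = (S i)⁻¹) {x y : G}
    {m a b : ℕ} (hx : x ∈ ballS S m) (hy : y ∉ ballS S (m + a + b)) :
    Disjoint ((x * ·) '' ballS S a) ((y * ·) '' ballS S b) := by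
  refine Set.disjoint_left.2 ?_
  rintro _ ⟨u, hu, rfl⟩ ⟨v, hv, hyv⟩
  have hy' : y = x * u * v⁻¹ := eq_mul_inv_of_mul_eq hyv
  exact hy (hy' ▸ mul_mem_ballS (mul_mem_ballS hx hu) (inv_mem_ballS hι hv))

theorem disjoint_one_mul_ballS {ι : Fin k → Fin k} (hι : ∀ i, S (ι i) = (S i)⁻¹) {y : G}
    {b : ℕ} (hy : y ∉ ballS S b) : Disjoint {1} ((y * ·) '' ballS S b) := by
  refine Set.disjoint_left.2 ?_
  rintro _ rfl ⟨v, hv, hyv⟩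
  exact hy (eq_inv_of_mul_eq_one_left hyv ▸ inv_mem_ballS hι hv)

theorem pairwise_disjoint_one_and_mul_ballS {ι : Fin k → Fin k}
    (hι : ∀ i, S (ι i) = (S i)⁻¹) {x : ℕ → G}
    (hx : ∀ j, x j ∈ ballS S (j * j + 1) ∧ x j ∉ ballS S (j * j))
    {β : Type} {c : β → ℕ} (hc : Injective c) {ρ : β → ℕ} (hρ : ∀ p, 2 * ρ p ≤ c p) :
    Pairwise (Disjoint on fun i : Option β =>
      i.elim {1} fun p => (x (c p) * ·) '' ballS S (ρ p)) := by
  have hlt : ∀ p q, c p < c q →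
      Disjoint ((x (c p) * ·) '' ballS S (ρ p)) ((x (c q) * ·) '' ballS S (ρ q)) :=
    fun p q hpq => disjoint_mul_ballS hι (hx (c p)).1 fun h => (hx (c q)).2 <| ballS_mono (by
      nlinarith [hρ p, hρ q]) h
  have hone : ∀ q, Disjoint {1} ((x (c q) * ·) '' ballS S (ρ q)) :=
    fun q => disjoint_one_mul_ballS hι fun h => (hx (c q)).2 <| ballS_mono (by nlinarith [hρ q]) h
  rintro (_ | p) (_ | q) hne
  · exact absurd rfl hne
  · exact hone q
  · exact (hone p).symm
  · rcases Nat.lt_or_gt_of_ne (hc.ne (Option.some_injective _ |>.ne_iff.1 hne)) with h | h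
    · exact hlt p q h
    · exact (hlt q p h).symm

end Balls

def wordsLE (k : ℕ) : ℕ → List (List (Fin k))
  | 0 => [[]]
  | n + 1 => [] :: (wordsLE k n).flatMap fun w => (List.finRange k).map (· :: w)

theorem mem_wordsLE {k n : ℕ} {w : List (Fin k)} : w ∈ wordsLE k n ↔ w.length ≤ n := by
  induction n generalizing w with
  | zero => simp [wordsLE]
  | succ n ih =>
    rcases w with _ | ⟨i, w⟩
    · simp [wordsLE]
    · simp [wordsLE, ih]

theorem primrec_wordsLE (k : ℕ) : Primrec (wordsLE k) := by
  have hstep : Primrec₂ fun (_ : ℕ) (l : List (List (Fin k))) =>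
      [] :: l.flatMap fun w => (List.finRange k).map (· :: w) :=
    (Primrec.list_cons.comp (Primrec.const []) (Primrec.list_flatMap Primrec.snd
      (Primrec.list_map (Primrec.const _)
        (Primrec.list_cons.comp₂ Primrec₂.right
          (Primrec.snd.comp₂ Primrec₂.left))).to₂)).to₂
  refine (Primrec.nat_rec₁ [[]] hstep).of_eq fun n => ?_
  induction n with
  | zero => rfl
  | succ n ih => simp only [wordsLE, ← ih]

section FarWord

variable {k : ℕ} (ι : Fin k → Fin k)

def farWord (ans : List (Fin k) → Bool) (N : ℕ) : List (Fin k) :=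
  ((wordsLE k (N + 1)).find? fun w => (wordsLE k N).all fun v => !ans (w ++ invWord ι v)).getD []

theorem farWord_spec {G : Type} [Group G] [Infinite G] {S : Fin k → G}
    (hι : ∀ i, S (ι i) = (S i)⁻¹) (hgen : Subgroup.closure (Set.range S) = ⊤)
    {ans : List (Fin k) → Bool} {N : ℕ}
    (hans : ∀ w v : List (Fin k), w.length ≤ N + 1 → v.length ≤ N →
      (ans (w ++ invWord ι v) = true ↔ wordEval S w = wordEval S v)) :
    (farWord ι ans N).length ≤ N + 1 ∧ wordEval S (farWord ι ans N) ∉ ballS S N := by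
  set good : List (Fin k) → Bool := fun w => (wordsLE k N).all fun v => !ans (w ++ invWord ι v)
  have hgood : ∀ w ∈ wordsLE k (N + 1), good w = true ↔ wordEval S w ∉ ballS S N := by
    intro w hw
    calc _ ↔ ∀ v : List (Fin k), v.length ≤ N → wordEval S w ≠ wordEval S v := by
          simp only [good, List.all_eq_true, Bool.not_eq_true', mem_wordsLE]
          refine forall₂_congr fun v hv => ?_
          rw [← Bool.not_eq_true]
          exact not_congr (hans w v (mem_wordsLE.1 hw) hv)
      _ ↔ _ := by simp [ballS, eq_comm]
  obtain ⟨w₀, hw₀, hw₀far⟩ := exists_length_le_succ_notMem_ballS hι hgen N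
  obtain ⟨w, hw⟩ := Option.isSome_iff_exists.1 <| List.find?_isSome.2
    ⟨w₀, mem_wordsLE.2 hw₀, (hgood w₀ (mem_wordsLE.2 hw₀)).2 hw₀far⟩
  have hfar : farWord ι ans N = w := congrArg (Option.getD · []) hw
  have hwmem := List.mem_of_find?_eq_some hw
  exact hfar ▸ ⟨mem_wordsLE.1 hwmem, (hgood w hwmem).1 (List.find?_some hw)⟩

end FarWord

section OracleSearch

open Encodable

variable {k : ℕ} (ι : Fin k → Fin k)

def queries (N : ℕ) : List (List (Fin k)) :=
  (wordsLE k (N + 1)).flatMap fun w => (wordsLE k N).map fun v => w ++ invWord ι v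

-- `t` is read as a table of oracle answers: `t[encode u] = 1` means that `u` represents `1`.
def farWordOfTable (N : ℕ) (t : List ℕ) : List (Fin k) :=
  farWord ι (fun u => t.getD (encode u) 0 == 1) N

theorem primrec_invWord : Primrec (invWord ι) :=
  Primrec.list_reverse.comp
    (Primrec.list_map Primrec.id ((Primrec.dom_finite ι).comp Primrec.snd).to₂)

theorem primrec_queries : Primrec (queries ι) :=
  Primrec.list_flatMap ((primrec_wordsLE k).comp Primrec.succ)
    (Primrec.list_map ((primrec_wordsLE k).comp Primrec.fst)
      (Primrec.list_append.comp₂ (Primrec.snd.comp₂ Primrec₂.left)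
        ((primrec_invWord ι).comp₂ Primrec₂.right))).to₂

theorem primrec₂_farWordOfTable : Primrec₂ (farWordOfTable (k := k) ι) := by
  have hans : Primrec₂ fun (x : (ℕ × List ℕ) × List (Fin k)) (v : List (Fin k)) =>
      !(x.1.2.getD (encode (x.2 ++ invWord ι v)) 0 == 1) :=
    (Primrec.not.comp (Primrec.beq.comp ((Primrec.list_getD 0).comp
      (Primrec.snd.comp (Primrec.fst.comp Primrec.fst))
      (Primrec.encode.comp (Primrec.list_append.comp (Primrec.snd.comp Primrec.fst)
        ((primrec_invWord ι).comp Primrec.snd)))) (Primrec.const 1))).to₂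
  exact (Primrec.option_getD.comp (Primrec.list_find?
    ((primrec_wordsLE k).comp (Primrec.succ.comp Primrec.fst))
    (Primrec.list_all ((primrec_wordsLE k).comp (Primrec.fst.comp Primrec.fst)) hans).to₂)
    (Primrec.const [])).to₂

variable {G : Type} [Group G] (S : Fin k → G)

def wpIndicator (m : ℕ) : ℕ := if ∃ a ∈ WP S, encode a = m then 1 else 0

theorem wpIndicator_encode (u : List (Fin k)) :
    wpIndicator S (encode u) = if wordEval S u = 1 then 1 else 0 := by
  simp [wpIndicator, WP]

-- The table covers every query, since a list has a larger code than each of its elements.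
def wpFarWord (N : ℕ) : List (Fin k) :=
  farWordOfTable ι N ((List.range (encode (queries ι N))).map (wpIndicator S))

theorem computableIn_wpFarWord {r : ℕ → ℕ} (hr : Primrec r) :
    ComputableIn {charFun (WP S)} fun j => wpFarWord ι S (r j) :=
  -- `charFun (WP S)` is definitionally `fun m => Part.some (wpIndicator S m)`.
  Primrec₂.computableIn_map_range_comp (wpIndicator S)
    ((primrec₂_farWordOfTable ι).comp (hr.comp Primrec.fst) Primrec.snd)
    (Primrec.encode.comp ((primrec_queries ι).comp hr))

variable {ι S}

theorem wpFarWord_spec [Infinite G] (hι : ∀ i, S (ι i) = (S i)⁻¹)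
    (hgen : Subgroup.closure (Set.range S) = ⊤) (N : ℕ) :
    wordEval S (wpFarWord ι S N) ∈ ballS S (N + 1) ∧
      wordEval S (wpFarWord ι S N) ∉ ballS S N := by
  set t := (List.range (encode (queries ι N))).map (wpIndicator S)
  have hans : ∀ w v : List (Fin k), w.length ≤ N + 1 → v.length ≤ N →
      ((t.getD (encode (w ++ invWord ι v)) 0 == 1) = true ↔ wordEval S w = wordEval S v) := by
    intro w v hw hv
    have hq : w ++ invWord ι v ∈ queries ι N :=
      List.mem_flatMap.2 ⟨w, mem_wordsLE.2 hw, List.mem_map.2 ⟨v, mem_wordsLE.2 hv, rfl⟩⟩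
    simp [t, List.getD_eq_getElem?_getD, encode_lt_encode_of_mem hq, wpIndicator_encode,
      wordEval_invWord hι, mul_inv_eq_one]
  obtain ⟨hlen, hfar⟩ :=
    farWord_spec ι hι hgen (ans := fun u => t.getD (encode u) 0 == 1) (N := N) hans
  exact ⟨ballS_mono hlen (wordEval_mem_ballS _), hfar⟩

end OracleSearch

/-- In every infinite finitely generated group there are two sequences,
recursive with oracle the word problem, such that the singleton of the identity together with
the translated balls `g_n B_n` and `h_n B_n` form a pairwise disjoint family. -/
theorem recursive_disjoint_ball_sequences
    {G : Type} [Group G] [Infinite G] {k : ℕ} (S : Fin k → G) (hS : IsGenData S) :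
    ∃ f g : ℕ → List (Fin k),
      PartrecIn (charFun (WP S)) (fun n => Part.some (f n) : ℕ →. List (Fin k)) ∧
      PartrecIn (charFun (WP S)) (fun n => Part.some (g n) : ℕ →. List (Fin k)) ∧
      Pairwise (Function.onFun Disjoint (fun i : Option (Bool × ℕ) =>
        match i with
        | none => ({1} : Set G)
        | some (false, n) => (fun x => wordEval S (f n) * x) '' ballS S n
        | some (true, n) => (fun x => wordEval S (g n) * x) '' ballS S n)) := by
  choose ι hι using hS.2.1
  set x : ℕ → List (Fin k) := fun j => wpFarWord ι S (j * j)
  have hx : ∀ j, wordEval S (x j) ∈ ballS S (j * j + 1) ∧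
      wordEval S (x j) ∉ ballS S (j * j) :=
    fun j => wpFarWord_spec hι hS.2.2 (j * j)
  have hxc : ComputableIn {charFun (WP S)} x :=
    computableIn_wpFarWord ι S (Primrec.nat_mul.comp Primrec.id Primrec.id)
  refine ⟨fun n => x (2 * n), fun n => x (2 * n + 1),
    PartrecIn.of_computableIn (hxc.comp Primrec.nat_double.computableIn),
    PartrecIn.of_computableIn (hxc.comp Primrec.nat_double_succ.computableIn), ?_⟩
  convert pairwise_disjoint_one_and_mul_ballS hι hx
    (c := fun p : Bool × ℕ => 2 * p.2 + p.1.toNat) (fun ⟨b, n⟩ ⟨b', n'⟩ h => ?_)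
    (ρ := Prod.snd) (fun p => by omega) using 2
  · funext i
    rcases i with _ | ⟨_ | _, n⟩ <;> rfl
  · cases b <;> cases b' <;> simp at h ⊢ <;> omega

end SDG
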